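/- Let R → A be a homomorphism of associative unital rings and let (F, C) be an Ext^1-orthogonal pair of classes of left R-modules admitting special precover sequences. Assume that the underlying left R-module of A belongs to F, that for every F ∈ F the underlying left R-module of Hom_R(A, F) belongs to F, and that the class F is resolving in the category of left R-modules. Let M be a left R-module of F-resolution dimension ≤ l. Then the F-resolution dimension of the underlying left R-module of Hom_R(A, M) also does not exceed l. -/

import Mathlib

/-! Common definitions for the formalization of statements from
"An explicit self-dual construction of complete cotorsion pairs in the relative context". -/

open CategoryTheory

universe u

noncomputable section

noncomputable instance moduleCatHasExt (A : Type u) [Ring A] :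
    HasExt.{u+1} (ModuleCat.{u} A) :=
  letI := HasDerivedCategory.standard (ModuleCat.{u} A)
  hasExt_of_hasDerivedCategory _

namespace CotorsionPaper

section OneRing

variable {A : Type u} [Ring A]

/-- `Ext^n_A(X, Y) = 0`. -/
def extVanish (X Y : ModuleCat.{u} A) (n : ℕ) : Prop :=
  Subsingleton (Abelian.Ext X Y n)

/-- Two classes of left `A`-modules are `Ext^1`-orthogonal. -/
def Ext1Orthogonal (F C : Set (ModuleCat.{u} A)) : Prop :=
  ∀ X ∈ F, ∀ Y ∈ C, extVanish X Y 1

/-- `F^{⊥₁}`. -/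
def rightPerp (F : Set (ModuleCat.{u} A)) : Set (ModuleCat.{u} A) :=
  {Y | ∀ X ∈ F, extVanish X Y 1}

/-- `^{⊥₁}C`. -/
def leftPerp (C : Set (ModuleCat.{u} A)) : Set (ModuleCat.{u} A) :=
  {X | ∀ Y ∈ C, extVanish X Y 1}

/-- `(F, C)` is a cotorsion pair. -/
def IsCotorsionPair (F C : Set (ModuleCat.{u} A)) : Prop :=
  C = rightPerp F ∧ F = leftPerp C

/-- `M` admits a special precover sequence `0 → C' → F → M → 0` with `F ∈ F`, `C' ∈ C`. -/
def HasSpecialPrecover (F C : Set (ModuleCat.{u} A)) (M : ModuleCat.{u} A) : Prop :=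
  ∃ (C' Fm : ModuleCat.{u} A) (i : C' ⟶ Fm) (p : Fm ⟶ M) (w : i ≫ p = 0),
    (ShortComplex.mk i p w).ShortExact ∧ Fm ∈ F ∧ C' ∈ C

/-- `M` admits a special preenvelope sequence `0 → M → C → F' → 0` with `C ∈ C`, `F' ∈ F`. -/
def HasSpecialPreenvelope (F C : Set (ModuleCat.{u} A)) (M : ModuleCat.{u} A) : Prop :=
  ∃ (Cm F' : ModuleCat.{u} A) (i : M ⟶ Cm) (p : Cm ⟶ F') (w : i ≫ p = 0),
    (ShortComplex.mk i p w).ShortExact ∧ Cm ∈ C ∧ F' ∈ F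

/-- The pair `(F, C)` admits approximation sequences. -/
def HasApproximations (F C : Set (ModuleCat.{u} A)) : Prop :=
  (∀ M : ModuleCat.{u} A, HasSpecialPrecover F C M) ∧
  (∀ M : ModuleCat.{u} A, HasSpecialPreenvelope F C M)

/-- `(F, C)` is a complete cotorsion pair. -/
def IsCompleteCotorsionPair (F C : Set (ModuleCat.{u} A)) : Prop :=
  IsCotorsionPair F C ∧ HasApproximations F C

/-- Hereditariness: `Ext^n(F, C) = 0` for all `F ∈ F`, `C ∈ C` and `n ≥ 1`. -/
def IsHereditary (F C : Set (ModuleCat.{u} A)) : Prop :=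
  ∀ X ∈ F, ∀ Y ∈ C, ∀ n : ℕ, 1 ≤ n → extVanish X Y n

/-- `X^⊕`: the class of all direct summands of modules from `X`. -/
def summands (X : Set (ModuleCat.{u} A)) : Set (ModuleCat.{u} A) :=
  {M | ∃ Y ∈ X, ∃ (i : M ⟶ Y) (r : Y ⟶ M), i ≫ r = 𝟙 M}

def ClosedUnderExtensions (F : Set (ModuleCat.{u} A)) : Prop :=
  ∀ (S : ShortComplex (ModuleCat.{u} A)), S.ShortExact → S.X₁ ∈ F → S.X₃ ∈ F → S.X₂ ∈ F

def ClosedUnderEpiKernels (F : Set (ModuleCat.{u} A)) : Prop :=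
  ∀ (S : ShortComplex (ModuleCat.{u} A)), S.ShortExact → S.X₂ ∈ F → S.X₃ ∈ F → S.X₁ ∈ F

def ClosedUnderMonoCokernels (C : Set (ModuleCat.{u} A)) : Prop :=
  ∀ (S : ShortComplex (ModuleCat.{u} A)), S.ShortExact → S.X₁ ∈ C → S.X₂ ∈ C → S.X₃ ∈ C

def EveryModuleIsQuotient (F : Set (ModuleCat.{u} A)) : Prop :=
  ∀ M : ModuleCat.{u} A, ∃ X ∈ F, ∃ p : X ⟶ M, Epi p

def EveryModuleIsSubmodule (C : Set (ModuleCat.{u} A)) : Prop :=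
  ∀ M : ModuleCat.{u} A, ∃ X ∈ C, ∃ i : M ⟶ X, Mono i

/-- `F` is a resolving class. -/
def IsResolving (F : Set (ModuleCat.{u} A)) : Prop :=
  ClosedUnderExtensions F ∧ ClosedUnderEpiKernels F ∧ EveryModuleIsQuotient F

/-- `C` is a coresolving class. -/
def IsCoresolving (C : Set (ModuleCat.{u} A)) : Prop :=
  ClosedUnderExtensions C ∧ ClosedUnderMonoCokernels C ∧ EveryModuleIsSubmodule C

/-- `M` has `F`-resolution dimension at most `k`: there is an exact sequence
`0 → F_k → ⋯ → F_0 → M → 0` with all `F_i ∈ F` (encoded as an everywhere exact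
`ℕ`-indexed resolution vanishing in degrees `> k`). -/
def ResolutionDimLE (F : Set (ModuleCat.{u} A)) (M : ModuleCat.{u} A) (k : ℕ) : Prop :=
  ∃ (G : ℕ → ModuleCat.{u} A) (d : ∀ m, G (m+1) ⟶ G m) (ε : G 0 ⟶ M)
    (hd : ∀ m, d (m+1) ≫ d m = 0) (hε : d 0 ≫ ε = 0),
    (∀ i, i ≤ k → G i ∈ F) ∧ (∀ i, k < i → Limits.IsZero (G i)) ∧ Epi ε ∧
    (ShortComplex.mk (d 0) ε hε).Exact ∧
    (∀ m, (ShortComplex.mk (d (m+1)) (d m) (hd m)).Exact)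

/-- `M` has `C`-coresolution dimension at most `k`: there is an exact sequence
`0 → M → C^0 → ⋯ → C^k → 0` with all `C^i ∈ C`. -/
def CoresolutionDimLE (C : Set (ModuleCat.{u} A)) (M : ModuleCat.{u} A) (k : ℕ) : Prop :=
  ∃ (G : ℕ → ModuleCat.{u} A) (d : ∀ m, G m ⟶ G (m+1)) (η : M ⟶ G 0)
    (hd : ∀ m, d m ≫ d (m+1) = 0) (hη : η ≫ d 0 = 0),
    (∀ i, i ≤ k → G i ∈ C) ∧ (∀ i, k < i → Limits.IsZero (G i)) ∧ Mono η ∧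
    (ShortComplex.mk η (d 0) hη).Exact ∧
    (∀ m, (ShortComplex.mk (d m) (d (m+1)) (hd m)).Exact)

/-- `N` is `α`-cofiltered by the class `T`: there is an `α`-indexed cofiltration of `N`
(a compatible inverse system with `G 0 = 0`, `G α = N`, surjective successor transition
maps, which is continuous -- i.e. maps isomorphically onto the inverse limit -- at limit
ordinals) whose successive kernels are isomorphic to modules from `T`. -/
def IsCofilteredBy (T : Set (ModuleCat.{u} A)) (α : Ordinal.{u}) (N : ModuleCat.{u} A) : Prop :=
  ∃ (G : ∀ i : Ordinal.{u}, i ≤ α → ModuleCat.{u} A)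
    (π : ∀ (i j : Ordinal.{u}) (hj : j ≤ i) (hi : i ≤ α), G i hi ⟶ G j (hj.trans hi)),
    (∀ i (hi : i ≤ α), π i i le_rfl hi = 𝟙 (G i hi)) ∧
    (∀ i j k (hk : k ≤ j) (hj : j ≤ i) (hi : i ≤ α),
      π i j hj hi ≫ π j k hk (hj.trans hi) = π i k (hk.trans hj) hi) ∧
    Limits.IsZero (G 0 (show (0 : Ordinal.{u}) ≤ α from zero_le)) ∧
    G α le_rfl = N ∧
    (∀ i (hi : i + 1 ≤ α), Epi (π (i+1) i (show i ≤ i + 1 from le_self_add) hi)) ∧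
    (∀ i (hi : i ≤ α), Order.IsSuccLimit i →
      (∀ x y : G i hi,
        (∀ j (hj : j < i), π i j hj.le hi x = π i j hj.le hi y) → x = y) ∧
      (∀ c : ∀ (j : Ordinal.{u}) (hj : j < i), G j (hj.le.trans hi),
        (∀ j k (hk : k < j) (hj : j < i),
          π j k hk.le (hj.le.trans hi) (c j hj) = c k (hk.trans hj)) →
        ∃ x : G i hi, ∀ j (hj : j < i), π i j hj.le hi x = c j hj)) ∧
    (∀ i (hi : i + 1 ≤ α), ∃ X ∈ T,
      Nonempty ((LinearMap.ker (π (i+1) i (show i ≤ i + 1 from le_self_add) hi).hom) ≃ₗ[A] X))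

/-- `Cof_α(T)`. -/
def Cof (T : Set (ModuleCat.{u} A)) (α : Ordinal.{u}) : Set (ModuleCat.{u} A) :=
  {N | IsCofilteredBy T α N}

/-- `Cof(T)`: the union of `Cof_α(T)` over all ordinals `α`. -/
def CofAll (T : Set (ModuleCat.{u} A)) : Set (ModuleCat.{u} A) :=
  {N | ∃ α : Ordinal.{u}, IsCofilteredBy T α N}

/-- `M` is `α`-filtered by the class `S`: there is an increasing, continuous chain of
submodules starting at `0` and ending at `M` whose successive quotients are isomorphic
to modules from `S`. -/
def IsFilteredBy (S : Set (ModuleCat.{u} A)) (α : Ordinal.{u}) (M : ModuleCat.{u} A) : Prop :=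
  ∃ Fl : ∀ i : Ordinal.{u}, i ≤ α → Submodule A M,
    (∀ i j (hj : j ≤ i) (hi : i ≤ α), Fl j (hj.trans hi) ≤ Fl i hi) ∧
    Fl 0 (show (0 : Ordinal.{u}) ≤ α from zero_le) = ⊥ ∧
    Fl α le_rfl = ⊤ ∧
    (∀ i (hi : i ≤ α), Order.IsSuccLimit i →
      Fl i hi = ⨆ (j : Ordinal.{u}) (hj : j < i), Fl j (hj.le.trans hi)) ∧
    (∀ i (hi : i + 1 ≤ α), ∃ X ∈ S,
      Nonempty ((↥(Fl (i+1) hi) ⧸ (Submodule.comap (Fl (i+1) hi).subtype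
        (Fl i ((show i ≤ i + 1 from le_self_add).trans hi)))) ≃ₗ[A] X))

/-- `Fil_α(S)`. -/
def Fil (S : Set (ModuleCat.{u} A)) (α : Ordinal.{u}) : Set (ModuleCat.{u} A) :=
  {M | IsFilteredBy S α M}

/-- `Fil(S)`: the union of `Fil_α(S)` over all ordinals `α`. -/
def FilAll (S : Set (ModuleCat.{u} A)) : Set (ModuleCat.{u} A) :=
  {M | ∃ α : Ordinal.{u}, IsFilteredBy S α M}

/-- The product of `κ` copies of `U`. -/
def piPow (U : ModuleCat.{u} A) (κ : Type u) : ModuleCat.{u} A :=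
  ModuleCat.of A (κ → ↥U)

/-- The direct sum of `κ` copies of `U`. -/
def sumPow (U : ModuleCat.{u} A) (κ : Type u) : ModuleCat.{u} A :=
  ModuleCat.of A (κ →₀ ↥U)

/-- `Prod(U)`: direct summands of products of copies of `U`. -/
def ProdClass (U : ModuleCat.{u} A) : Set (ModuleCat.{u} A) :=
  {X | ∃ (κ : Type u) (i : X ⟶ piPow U κ) (r : piPow U κ ⟶ X), i ≫ r = 𝟙 X}

/-- `Add(U)`: direct summands of direct sums of copies of `U`. -/
def AddClass (U : ModuleCat.{u} A) : Set (ModuleCat.{u} A) :=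
  {X | ∃ (κ : Type u) (i : X ⟶ sumPow U κ) (r : sumPow U κ ⟶ X), i ≫ r = 𝟙 X}

/-- `J` is an injective cogenerator. -/
def IsInjectiveCogenerator (J : ModuleCat.{u} A) : Prop :=
  Injective J ∧ IsCoseparator J

/-- `P` is a projective generator. -/
def IsProjectiveGenerator (P : ModuleCat.{u} A) : Prop :=
  Projective P ∧ IsSeparator P

/-- `U` is an `n`-cotilting module: (C1) injective dimension at most `n`;
(C2) `Ext^i(U^κ, U) = 0` for all `i > 0` and all `κ`; (C3) there is an exact sequence
`0 → U_n → ⋯ → U_0 → J → 0` with `J` an injective cogenerator and `U_i ∈ Prod(U)`. -/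
def IsCotilting (n : ℕ) (U : ModuleCat.{u} A) : Prop :=
  CoresolutionDimLE {J : ModuleCat.{u} A | Injective J} U n ∧
  (∀ (κ : Type u) (i : ℕ), 0 < i → extVanish (piPow U κ) U i) ∧
  (∃ J : ModuleCat.{u} A, IsInjectiveCogenerator J ∧ ResolutionDimLE (ProdClass U) J n)

/-- The cotilting class `{}^{⊥_{>0}}U` induced by `U`. -/
def cotiltingClass (U : ModuleCat.{u} A) : Set (ModuleCat.{u} A) :=
  {M | ∀ i : ℕ, 0 < i → extVanish M U i}

/-- `D` admits an `m`-step cofiltration `D = G_m ↠ ⋯ ↠ G_1 ↠ G_0 = 0` with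
`ker (G_{i+1} → G_i)` isomorphic to a module from `T i`. -/
def FinCofilteredLevels (m : ℕ) (T : Fin m → Set (ModuleCat.{u} A)) :
    Set (ModuleCat.{u} A) :=
  {D | ∃ (G : Fin (m+1) → ModuleCat.{u} A) (p : ∀ i : Fin m, G i.succ ⟶ G i.castSucc),
    Limits.IsZero (G 0) ∧ G (Fin.last m) = D ∧ (∀ i, Epi (p i)) ∧
    (∀ i : Fin m, ∃ X ∈ T i, Nonempty ((LinearMap.ker (p i).hom) ≃ₗ[A] X))}

/-- `D` admits an `m`-step cofiltration with all successive kernels isomorphic to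
modules from the class `T`. -/
def FinCofiltered (m : ℕ) (T : Set (ModuleCat.{u} A)) : Set (ModuleCat.{u} A) :=
  FinCofilteredLevels m (fun _ => T)

/-- `G` admits an `m`-step filtration `0 = F_0 ⊆ F_1 ⊆ ⋯ ⊆ F_m = G` with
`F_{i+1}/F_i` isomorphic to a module from `T i`. -/
def FinFilteredLevels (m : ℕ) (T : Fin m → Set (ModuleCat.{u} A)) :
    Set (ModuleCat.{u} A) :=
  {G | ∃ Fl : Fin (m+1) → Submodule A G,
    Monotone Fl ∧ Fl 0 = ⊥ ∧ Fl (Fin.last m) = ⊤ ∧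
    (∀ i : Fin m, ∃ X ∈ T i, Nonempty
      ((↥(Fl i.succ) ⧸ (Submodule.comap (Fl i.succ).subtype (Fl i.castSucc))) ≃ₗ[A] X))}

end OneRing

section TwoRings

variable {R : Type u} {A : Type u} [Ring R] [Ring A]

/-- The underlying left `R`-module of `A`, via `f : R →+* A`. -/
def AasR (f : R →+* A) : ModuleCat.{u} R :=
  (ModuleCat.restrictScalars f).obj (ModuleCat.of A A)

/-- The class of left `A`-modules whose underlying `R`-module belongs to `F`. -/
def liftClass (f : R →+* A) (F : Set (ModuleCat.{u} R)) : Set (ModuleCat.{u} A) :=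
  {M | (ModuleCat.restrictScalars f).obj M ∈ F}

/-- The coinduced module `Hom_R(A, M)`. -/
def coind (f : R →+* A) (M : ModuleCat.{u} R) : ModuleCat.{u} A :=
  (ModuleCat.coextendScalars f).obj M

/-- The class of left `A`-modules of the form `Hom_R(A, C)`, `C ∈ 𝒞` (up to isomorphism). -/
def coindClass (f : R →+* A) (C : Set (ModuleCat.{u} R)) : Set (ModuleCat.{u} A) :=
  {N | ∃ X ∈ C, Nonempty (N ≅ coind f X)}

/-- `(T, η)` is the module induced from the `R`-module `L` along `f`, i.e. `T ≅ A ⊗_R L`: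
`η : L → T` is an `R`-linear map which is universal among `R`-linear maps from `L` to
(the restriction of) left `A`-modules. -/
def IsInducedFrom (f : R →+* A) (L : ModuleCat.{u} R) (T : ModuleCat.{u} A)
    (η : L ⟶ (ModuleCat.restrictScalars f).obj T) : Prop :=
  ∀ (X : ModuleCat.{u} A) (g : L ⟶ (ModuleCat.restrictScalars f).obj X),
    ∃! h : T ⟶ X, η ≫ (ModuleCat.restrictScalars f).map h = g

/-- The class of left `A`-modules of the form `A ⊗_R X`, `X ∈ F`. -/
def indClass (f : R →+* A) (F : Set (ModuleCat.{u} R)) : Set (ModuleCat.{u} A) :=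
  {T | ∃ X ∈ F, ∃ η, IsInducedFrom f X T η}

/-- `Tor^R_i(A, L) = 0` for all `0 < i ≤ n`: there is a projective resolution
`P_• → L` of the `R`-module `L` such that the induced complex of `A`-modules
`A ⊗_R P_•` is exact in homological degrees `1, …, n`. -/
def TorVanishesUpTo (f : R →+* A) (L : ModuleCat.{u} R) (n : ℕ) : Prop :=
  ∃ (P : ℕ → ModuleCat.{u} R) (d : ∀ m, P (m+1) ⟶ P m) (ε : P 0 ⟶ L)
    (hd : ∀ m, d (m+1) ≫ d m = 0) (hε : d 0 ≫ ε = 0),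
    (∀ m, Projective (P m)) ∧ Epi ε ∧ (ShortComplex.mk (d 0) ε hε).Exact ∧
    (∀ m, (ShortComplex.mk (d (m+1)) (d m) (hd m)).Exact) ∧
    ∃ (T : ℕ → ModuleCat.{u} A) (η : ∀ m, P m ⟶ (ModuleCat.restrictScalars f).obj (T m))
      (D : ∀ m, T (m+1) ⟶ T m) (hD : ∀ m, D (m+1) ≫ D m = 0),
      (∀ m, IsInducedFrom f (P m) (T m) (η m)) ∧
      (∀ m, η (m+1) ≫ (ModuleCat.restrictScalars f).map (D m) = d m ≫ η m) ∧
      (∀ j, j + 1 ≤ n → (ShortComplex.mk (D (j+1)) (D j) (hD j)).Exact)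

/-- The `R`-module structure on the character module `A⁺ = Hom_ℤ(A, ℚ/ℤ)`,
given by `(r • φ) a = φ (a * f r)`. -/
def aplusModule (f : R →+* A) : Module R (A →+ AddCircle (1 : ℚ)) where
  smul r φ := φ.comp (AddMonoidHom.mulRight (f r))
  one_smul φ := AddMonoidHom.ext fun a => by
    have h : f (1 : R) = 1 := map_one f
    show φ (a * f 1) = φ a
    rw [h, mul_one]
  mul_smul r s φ := AddMonoidHom.ext fun a => by
    have h : f (r * s) = f r * f s := map_mul f r s
    show φ (a * f (r * s)) = φ (a * f r * f s)
    rw [h, mul_assoc]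
  smul_zero r := AddMonoidHom.ext fun _ => rfl
  smul_add r φ ψ := AddMonoidHom.ext fun _ => rfl
  add_smul r s φ := AddMonoidHom.ext fun a => by
    have h : f (r + s) = f r + f s := map_add f r s
    show φ (a * f (r + s)) = φ (a * f r) + φ (a * f s)
    rw [h, mul_add, map_add]
  zero_smul φ := AddMonoidHom.ext fun a => by
    have h : f (0 : R) = 0 := map_zero f
    show φ (a * f 0) = 0
    rw [h, mul_zero, map_zero]

/-- The character module `A⁺ = Hom_ℤ(A, ℚ/ℤ)` as a left `R`-module. -/
def aplus (f : R →+* A) : ModuleCat.{u} R :=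
  @ModuleCat.of R _ (A →+ AddCircle (1 : ℚ)) _ (aplusModule f)

end TwoRings

end CotorsionPaper

open CotorsionPaper

/-! Induction on `l`. For `l + 1`, take a special precover `0 → C' → F_M → M → 0`. As `F` is
resolving, dimension shifting gives `C'` resolution dimension `≤ l`. As `A ∈ F` and `C' ∈ C`,
`Ext¹_R(A, C') = 0`, so `Hom_R(A, -)` keeps the sequence short exact; its middle term
`Hom_R(A, F_M)` lies in `F` and induction applies to `Hom_R(A, C')`. -/

namespace CategoryTheory

open Limits

variable {C : Type*} [Category C] [Abelian C]

namespace ShortComplex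

lemma exact_iff_of_comp_mono {X₁ X₂ X₃ X₄ : C} {f : X₁ ⟶ X₂} {g : X₂ ⟶ X₃} {g' : X₂ ⟶ X₄}
    (i : X₃ ⟶ X₄) [Mono i] (hg : g ≫ i = g') (w : f ≫ g = 0) (w' : f ≫ g' = 0) :
    (ShortComplex.mk f g w).Exact ↔ (ShortComplex.mk f g' w').Exact :=
  exact_iff_of_epi_of_isIso_of_mono
    { τ₁ := 𝟙 _, τ₂ := 𝟙 _, τ₃ := i, comm₂₃ := by simp [hg] }

lemma exact_iff_of_epi_comp {X₀ X₁ X₂ X₃ : C} {f : X₁ ⟶ X₂} {f' : X₀ ⟶ X₂} {g : X₂ ⟶ X₃}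
    (π : X₀ ⟶ X₁) [Epi π] (hf : π ≫ f = f') (w : f ≫ g = 0) (w' : f' ≫ g = 0) :
    (ShortComplex.mk f' g w').Exact ↔ (ShortComplex.mk f g w).Exact :=
  exact_iff_of_epi_of_isIso_of_mono
    { τ₁ := π, τ₂ := 𝟙 _, τ₃ := 𝟙 _, comm₁₂ := by simp [hf] }

namespace ShortExact

variable {S : ShortComplex C} (hS : S.ShortExact)
include hS

lemma shortExact_isPullback_snd {P Y : C} {fst : P ⟶ S.X₂} {snd : P ⟶ Y} {p : Y ⟶ S.X₃}
    (h : IsPullback fst snd S.g p) :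
    (ShortComplex.mk (h.lift S.f 0 (by simp)) snd (by simp)).ShortExact := by
  have := hS.mono_f
  have := hS.epi_g
  have : Mono (h.lift S.f 0 (by simp)) := mono_of_mono_fac (h.lift_fst _ _ _)
  have : Epi snd := Abelian.epi_snd_of_isLimit _ _ h.isLimit
  refine { exact := ?_ }
  rw [exact_iff_exact_up_to_refinements]
  intro A x hx
  obtain ⟨A', π, hπ, x₁, hx₁⟩ := hS.exact.exact_up_to_refinements (x ≫ fst)
    (by simp [h.w, reassoc_of% hx])
  exact ⟨A', π, hπ, x₁, h.hom_ext (by simpa using hx₁) (by simp [hx])⟩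

lemma shortExact_isPullback_fst {P Y : C} {fst : P ⟶ Y} {snd : P ⟶ S.X₁} {q : Y ⟶ S.X₂}
    [Epi q] (h : IsPullback fst snd q S.f) :
    (ShortComplex.mk fst (q ≫ S.g) (by rw [h.w_assoc, S.zero, comp_zero])).ShortExact := by
  have := hS.mono_f
  have := hS.epi_g
  have : Mono fst := h.mono_fst_of_mono
  refine { exact := ?_ }
  rw [exact_iff_exact_up_to_refinements]
  intro A x hx
  obtain ⟨A', π, hπ, x₁, hx₁⟩ := hS.exact.exact_up_to_refinements (x ≫ q) (by simpa using hx)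
  exact ⟨A', π, hπ, h.lift (π ≫ x) x₁ (by simpa using hx₁), by simp⟩

lemma exists_lift_of_subsingleton_ext [HasExt C] {X : C} [Subsingleton (Abelian.Ext X S.X₁ 1)]
    (g : X ⟶ S.X₃) : ∃ g' : X ⟶ S.X₂, g' ≫ S.g = g := by
  obtain ⟨φ, hφ⟩ := Abelian.Ext.covariant_sequence_exact₃ _ hS (Abelian.Ext.mk₀ g) (zero_add 1)
    (by subsingleton)
  obtain ⟨g', rfl⟩ := Abelian.Ext.homEquiv₀.symm.surjective φ
  exact ⟨g', Abelian.Ext.homEquiv₀.symm.injective (by simpa using hφ)⟩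

end ShortExact

end ShortComplex

end CategoryTheory

namespace CotorsionPaper

open CategoryTheory Limits ZeroObject

section ResolutionDimension

variable {R : Type u} [Ring R] {F : Set (ModuleCat.{u} R)}

lemma IsResolving.mem_of_isZero (hF : IsResolving F) {Z : ModuleCat.{u} R} (hZ : IsZero Z) :
    Z ∈ F := by
  obtain ⟨X, hX, -⟩ := hF.2.2 Z
  have := hZ.mono (0 : Z ⟶ X)
  exact hF.2.1 (ShortComplex.mk (0 : Z ⟶ X) (𝟙 X) (by simp))
    (.mk' ((ShortComplex.exact_iff_mono _ rfl).2 inferInstance) this inferInstance) hX hX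

lemma IsResolving.mem_of_iso (hF : IsResolving F) {M N : ModuleCat.{u} R} (e : M ≅ N)
    (hN : N ∈ F) : M ∈ F := by
  have := isZero_zero (ModuleCat.{u} R) |>.epi (0 : N ⟶ 0)
  exact hF.2.1 (ShortComplex.mk e.hom (0 : N ⟶ 0) (by simp))
    (.mk' ((ShortComplex.exact_iff_epi _ rfl).2 inferInstance) inferInstance this) hN
    (hF.mem_of_isZero (isZero_zero _))

lemma resolutionDimLE_zero_iff (hF : IsResolving F) {M : ModuleCat.{u} R} :
    ResolutionDimLE F M 0 ↔ M ∈ F := by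
  constructor
  · rintro ⟨G, d, ε, -, hε, hG, hzero, hepi, hexact, -⟩
    have : Mono ε := (ShortComplex.exact_iff_mono _ ((hzero 1 one_pos).eq_of_src _ _)).1 hexact
    have := isIso_of_mono_of_epi ε
    exact hF.mem_of_iso (asIso ε).symm (hG 0 le_rfl)
  · intro hM
    refine ⟨fun | 0 => M | _ + 1 => 0, fun _ ↦ 0, 𝟙 M, fun _ ↦ by simp, by simp,
      fun | 0, _ => hM, fun | _ + 1, _ => isZero_zero _, inferInstance,
      (ShortComplex.exact_iff_mono _ rfl).2 inferInstance,
      fun _ ↦ ShortComplex.exact_of_isZero_X₂ _ (isZero_zero _)⟩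

lemma resolutionDimLE_X₃_of_mem_X₂ {S : ShortComplex (ModuleCat.{u} R)}
    (hS : S.ShortExact) (h₂ : S.X₂ ∈ F) {l : ℕ} (h₁ : ResolutionDimLE F S.X₁ l) :
    ResolutionDimLE F S.X₃ (l + 1) := by
  obtain ⟨G, d, ε, hd, hε, hG, hzero, hepi, hexact, hexacts⟩ := h₁
  have := hS.mono_f
  have := hS.epi_g
  let G' : ℕ → ModuleCat.{u} R := fun | 0 => S.X₂ | n + 1 => G n
  let d' : ∀ m, G' (m + 1) ⟶ G' m := fun | 0 => ε ≫ S.f | m + 1 => d m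
  have hd' : ∀ m, d' (m + 1) ≫ d' m = 0 := fun
    | 0 => by simp [d', reassoc_of% hε]
    | m + 1 => hd m
  refine ⟨G', d', S.g, hd', by simp [d'], fun | 0, _ => h₂ | i + 1, hi => hG i (by omega),
    fun | i + 1, hi => hzero i (by omega), inferInstance,
    (ShortComplex.exact_iff_of_epi_comp ε rfl S.zero _).2 hS.exact,
    fun | 0 => ?_ | m + 1 => hexacts m⟩
  exact (ShortComplex.exact_iff_of_comp_mono S.f rfl hε _).1 hexact

lemma ResolutionDimLE.exists_shortExact_of_succ {M : ModuleCat.{u} R} {l : ℕ}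
    (hM : ResolutionDimLE F M (l + 1)) :
    ∃ (K G₀ : ModuleCat.{u} R) (i : K ⟶ G₀) (p : G₀ ⟶ M) (w : i ≫ p = 0),
      (ShortComplex.mk i p w).ShortExact ∧ G₀ ∈ F ∧ ResolutionDimLE F K l := by
  obtain ⟨G, d, ε, hd, hε, hG, hzero, hepi, hexact, hexacts⟩ := hM
  refine ⟨kernel ε, G 0, kernel.ι ε, ε, kernel.condition ε,
    { exact := ShortComplex.exact_kernel ε }, hG 0 (Nat.zero_le _),
    fun n ↦ G (n + 1), fun m ↦ d (m + 1), kernel.lift ε (d 0) hε, fun m ↦ hd (m + 1),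
    by simp [← cancel_mono (kernel.ι ε), hd 0], fun i hi ↦ hG (i + 1) (by omega),
    fun i hi ↦ hzero (i + 1) (by omega), hexact.epi_kernelLift,
    (ShortComplex.exact_iff_of_comp_mono (kernel.ι ε) (kernel.lift_ι _ _ _) _ (hd 0)).2
      (hexacts 0), fun m ↦ hexacts (m + 1)⟩

end ResolutionDimension

namespace IsResolving

variable {R : Type u} [Ring R] {F : Set (ModuleCat.{u} R)} (hF : IsResolving F)
include hF

lemma pullback_mem {S : ShortComplex (ModuleCat.{u} R)} (hS : S.ShortExact) (h₃ : S.X₃ ∈ F)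
    {G₀ : ModuleCat.{u} R} (hG₀ : G₀ ∈ F) (q : G₀ ⟶ S.X₂) [Epi q] : pullback q S.f ∈ F :=
  hF.2.1 _ (hS.shortExact_isPullback_fst (IsPullback.of_hasPullback q S.f)) hG₀ h₃

lemma resolutionDimLE_X₁_of_mem_X₃ {S : ShortComplex (ModuleCat.{u} R)} (hS : S.ShortExact)
    (h₃ : S.X₃ ∈ F) : ∀ {l : ℕ}, ResolutionDimLE F S.X₂ l → ResolutionDimLE F S.X₁ l
  | 0, h₂ => by
    rw [resolutionDimLE_zero_iff hF] at h₂ ⊢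
    exact hF.2.1 S hS h₂ h₃
  | l + 1, h₂ => by
    obtain ⟨K, G₀, i, q, w, hT, hG₀, hK⟩ := h₂.exists_shortExact_of_succ
    have := hT.epi_g
    -- `G₀ ×_{S.X₂} S.X₁` lies in `F` and maps onto `S.X₁` with kernel `K`.
    exact resolutionDimLE_X₃_of_mem_X₂ (hT.shortExact_isPullback_snd
      (IsPullback.of_hasPullback q S.f)) (hF.pullback_mem hS h₃ hG₀ q) hK

/-- Dimension shifting at level `l`, assuming closure under extensions at level `l`; the two are
proved by a joint induction in `resolutionDimLE_X₂_of_mem_X₃`. -/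
lemma resolutionDimLE_X₁_of_mem_X₂_of_extensions {l : ℕ}
    (hext : ∀ S : ShortComplex (ModuleCat.{u} R), S.ShortExact → S.X₃ ∈ F →
      ResolutionDimLE F S.X₁ l → ResolutionDimLE F S.X₂ l)
    {S : ShortComplex (ModuleCat.{u} R)} (hS : S.ShortExact) (h₂ : S.X₂ ∈ F)
    (h₃ : ResolutionDimLE F S.X₃ (l + 1)) : ResolutionDimLE F S.X₁ l := by
  obtain ⟨K, G₀, i, p, w, hT, hG₀, hK⟩ := h₃.exists_shortExact_of_succ
  -- `S.X₂ ×_{S.X₃} G₀` is an extension of `S.X₂` by `K` and of `G₀` by `S.X₁`.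
  have hP := IsPullback.of_hasPullback S.g p
  have hPdim : ResolutionDimLE F (pullback S.g p) l :=
    hext _ (hT.shortExact_isPullback_snd hP.flip) h₂ hK
  exact hF.resolutionDimLE_X₁_of_mem_X₃ (hS.shortExact_isPullback_snd hP) hG₀ hPdim

lemma resolutionDimLE_X₂_of_mem_X₃ : ∀ {l : ℕ} {S : ShortComplex (ModuleCat.{u} R)},
    S.ShortExact → S.X₃ ∈ F → ResolutionDimLE F S.X₁ l → ResolutionDimLE F S.X₂ l
  | 0, S, hS, h₃, h₁ => by
    rw [resolutionDimLE_zero_iff hF] at h₁ ⊢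
    exact hF.1 S hS h₁ h₃
  | l + 1, S, hS, h₃, h₁ => by
    obtain ⟨G₀, hG₀, q, hq⟩ := hF.2.2 S.X₂
    have hT : (ShortComplex.mk (kernel.ι q) q (kernel.condition q)).ShortExact :=
      { exact := ShortComplex.exact_kernel q }
    have hK : ResolutionDimLE F (kernel q) l := hF.resolutionDimLE_X₁_of_mem_X₂_of_extensions
      (fun _ ↦ resolutionDimLE_X₂_of_mem_X₃)
      (hT.shortExact_isPullback_snd (IsPullback.of_hasPullback q S.f))
      (hF.pullback_mem hS h₃ hG₀ q) h₁
    exact resolutionDimLE_X₃_of_mem_X₂ hT hG₀ hK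

lemma resolutionDimLE_X₁_of_mem_X₂ {l : ℕ} {S : ShortComplex (ModuleCat.{u} R)}
    (hS : S.ShortExact) (h₂ : S.X₂ ∈ F) (h₃ : ResolutionDimLE F S.X₃ (l + 1)) :
    ResolutionDimLE F S.X₁ l :=
  hF.resolutionDimLE_X₁_of_mem_X₂_of_extensions (fun _ ↦ hF.resolutionDimLE_X₂_of_mem_X₃)
    hS h₂ h₃

end IsResolving

section Coinduction

variable {R A : Type u} [Ring R] [Ring A]

lemma shortExact_map_coextendScalars_restrictScalars (f : R →+* A)
    {S : ShortComplex (ModuleCat.{u} R)} (hS : S.ShortExact)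
    [Subsingleton (Abelian.Ext (AasR f) S.X₁ 1)] :
    (S.map (ModuleCat.coextendScalars f ⋙ ModuleCat.restrictScalars f)).ShortExact := by
  have := hS.mono_f
  refine .mk' (hS.exact.map_of_mono_of_preservesKernel _ this inferInstance)
    (Functor.map_mono (ModuleCat.coextendScalars f ⋙ ModuleCat.restrictScalars f) S.f)
    ((ModuleCat.epi_iff_surjective _).2 fun ψ ↦ ?_)
  obtain ⟨g, hg⟩ := hS.exists_lift_of_subsingleton_ext (X := AasR f)
    (ModuleCat.ofHom (X := AasR f) (Y := S.X₃) ψ)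
  exact ⟨g.hom, congrArg ModuleCat.Hom.hom hg⟩

end Coinduction

end CotorsionPaper

/-- Assume the `Ext¹`-orthogonal pair `(F, C)` admits special precover
sequences, the underlying `R`-module of `A` is in `F`, the coinduction functor
`Hom_R(A, -)` preserves `F`, and `F` is resolving.  If `M` has `F`-resolution dimension
`≤ l`, then so does the underlying `R`-module of `Hom_R(A, M)`. -/
theorem coinduction_preserves_resolution_dimension {R A : Type u} [Ring R] [Ring A]
    (f : R →+* A) (F C : Set (ModuleCat.{u} R))
    (horth : Ext1Orthogonal F C)
    (hprec : ∀ M : ModuleCat.{u} R, HasSpecialPrecover F C M)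
    (hA : AasR f ∈ F)
    (hdd : ∀ X ∈ F, (ModuleCat.restrictScalars f).obj (coind f X) ∈ F)
    (hres : IsResolving F)
    (l : ℕ) (M : ModuleCat.{u} R) (hM : ResolutionDimLE F M l) :
    ResolutionDimLE F ((ModuleCat.restrictScalars f).obj (coind f M)) l := by
  induction l generalizing M with
  | zero =>
    rw [resolutionDimLE_zero_iff hres] at hM ⊢
    exact hdd M hM
  | succ l ih =>
    obtain ⟨C', FM, i, p, w, hS, hFM, hC'⟩ := hprec M
    have hC'dim : ResolutionDimLE F C' l := hres.resolutionDimLE_X₁_of_mem_X₂ hS hFM hM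
    have : Subsingleton (Abelian.Ext (AasR f) C' 1) := horth _ hA _ hC'
    exact resolutionDimLE_X₃_of_mem_X₂ (shortExact_map_coextendScalars_restrictScalars f hS)
      (hdd FM hFM) (ih C' hC'dim)
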